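/- arXiv:1305.5697 — 3 statements merged into one kernel-verified Lean document; each statement's English description precedes it below -/
import Mathlib

section
/- Let γ ∈ [1/2, 1) have binary expansion γ = Σ_{k≥1} ε_k/2^k with ε_k ∈ {0,1} and ε_k = 0 for infinitely many k (so necessarily ε₁ = 1). Define f(γ) = 2γ − Σ_{k≥1} k·ε_k/2^k. Then f(γ/2 + 1/2) = (1/2)(1 − γ + f(γ)) and f(γ/2 + 1/4) = (1/2)(1 − γ + f(γ)). -/
/-- The `k`-th binary digit of `x` (for `k ≥ 1`), via the floor expansion; this is the
expansion with infinitely many zero digits. -/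
noncomputable def binDigit (x : ℝ) (k : ℕ) : ℤ :=
  ⌊2 ^ k * x⌋ - 2 * ⌊2 ^ (k - 1) * x⌋

/-- `f(γ) = 2γ − Σ_{k≥1} k ε_k 2^{-k}` where `(ε_k)` are the binary digits of `γ`. -/
noncomputable def fSteinhaus (γ : ℝ) : ℝ :=
  2 * γ - ∑' k : ℕ, ((k + 1 : ℕ) : ℝ) * (binDigit γ (k + 1) : ℝ) / 2 ^ (k + 1)

/-!
Write `W x = ∑_{k ≥ 1} k ε_k(x) / 2^k`, so that `f x = 2 x - W x`. Shifting the digit sequence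
by one place gives the doubling identity `W x = (ε₁(x) + W (2x) + fract (2x)) / 2`, and `W` only
sees `fract x`. For `x = γ/2 + 1/2` the doubled point is `γ + 1`; for `x = γ/2 + 1/4` it is
`(γ - 1/2) + 1`, and applying the doubling identity once more to `γ` and `γ - 1/2` (first digits
`1` and `0`, same double modulo `1`) gives `W (γ - 1/2) = W γ - 1/2`.
-/

open Filter Topology

lemma binDigit_succ_eq_binDigit_one (x : ℝ) (k : ℕ) :
    binDigit x (k + 1) = binDigit (2 ^ k * x) 1 := by
  simp only [binDigit, Nat.add_sub_cancel, pow_succ, pow_zero, one_mul, Nat.sub_self,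
    mul_assoc, mul_comm (2 : ℝ)]

lemma binDigit_one_nonneg (x : ℝ) : 0 ≤ binDigit x 1 := by
  have : 2 * ⌊x⌋ ≤ ⌊2 * x⌋ := Int.le_floor.mpr (by push_cast; linarith [Int.floor_le x])
  simp only [binDigit, pow_one, pow_zero, one_mul, Nat.sub_self]
  omega

lemma binDigit_one_le_one (x : ℝ) : binDigit x 1 ≤ 1 := by
  have : ⌊2 * x⌋ < 2 * ⌊x⌋ + 2 :=
    Int.floor_lt.mpr (by push_cast; linarith [Int.lt_floor_add_one x])
  simp only [binDigit, pow_one, pow_zero, one_mul, Nat.sub_self]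
  omega

lemma binDigit_succ_nonneg (x : ℝ) (k : ℕ) : 0 ≤ binDigit x (k + 1) :=
  binDigit_succ_eq_binDigit_one x k ▸ binDigit_one_nonneg _

lemma binDigit_succ_le_one (x : ℝ) (k : ℕ) : binDigit x (k + 1) ≤ 1 :=
  binDigit_succ_eq_binDigit_one x k ▸ binDigit_one_le_one _

lemma binDigit_one_eq_one {x : ℝ} (h₁ : 1 / 2 ≤ x) (h₂ : x < 1) : binDigit x 1 = 1 := by
  have h2x : ⌊2 * x⌋ = 1 := Int.floor_eq_iff.mpr ⟨by push_cast; linarith, by push_cast; linarith⟩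
  have hx : ⌊x⌋ = 0 := Int.floor_eq_zero_iff.mpr ⟨by linarith, h₂⟩
  simp [binDigit, h2x, hx]

lemma binDigit_one_eq_zero {x : ℝ} (h₁ : 0 ≤ x) (h₂ : x < 1 / 2) : binDigit x 1 = 0 := by
  have h2x : ⌊2 * x⌋ = 0 := Int.floor_eq_zero_iff.mpr ⟨by linarith, by linarith⟩
  have hx : ⌊x⌋ = 0 := Int.floor_eq_zero_iff.mpr ⟨h₁, by linarith⟩
  simp [binDigit, h2x, hx]

lemma binDigit_add_intCast (x : ℝ) (n : ℤ) (k : ℕ) :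
    binDigit (x + n) (k + 1) = binDigit x (k + 1) := by
  have hshift (m : ℕ) : ⌊(2 : ℝ) ^ m * (x + n)⌋ = ⌊2 ^ m * x⌋ + 2 ^ m * n := by
    rw [← Int.floor_add_intCast]
    push_cast
    ring_nf
  rw [binDigit, binDigit, Nat.add_sub_cancel, hshift, hshift, pow_succ]
  ring

lemma binDigit_two_mul (x : ℝ) (k : ℕ) : binDigit (2 * x) (k + 1) = binDigit x (k + 2) := by
  rw [binDigit, binDigit, Nat.add_sub_cancel, show k + 2 - 1 = k + 1 from rfl, ← mul_assoc,
    ← mul_assoc, ← pow_succ, ← pow_succ]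

/-- The partial sums of the digit series are the dyadic truncations `⌊2ⁿ x⌋ / 2ⁿ - ⌊x⌋`. -/
lemma hasSum_binDigit (x : ℝ) :
    HasSum (fun k : ℕ => (binDigit x (k + 1) : ℝ) / 2 ^ (k + 1)) (Int.fract x) := by
  set g : ℕ → ℝ := fun n => (⌊(2 : ℝ) ^ n * x⌋ : ℝ) / 2 ^ n
  have hpartial (n : ℕ) :
      ∑ i ∈ Finset.range n, (binDigit x (i + 1) : ℝ) / 2 ^ (i + 1) = g n - ⌊x⌋ := by
    have hterm (i : ℕ) : (binDigit x (i + 1) : ℝ) / 2 ^ (i + 1) = g (i + 1) - g i := by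
      simp only [g, binDigit, Nat.add_sub_cancel]
      push_cast
      field_simp
      ring
    rw [Finset.sum_congr rfl fun i _ => hterm i, Finset.sum_range_sub]
    simp [g]
  have hg : Tendsto g atTop (𝓝 x) := by
    have hlower : Tendsto (fun n : ℕ => x - (1 / 2 : ℝ) ^ n) atTop (𝓝 x) := by
      simpa using tendsto_const_nhds.sub
        (tendsto_pow_atTop_nhds_zero_of_lt_one (by norm_num : (0 : ℝ) ≤ 1 / 2) (by norm_num))
    refine tendsto_of_tendsto_of_tendsto_of_le_of_le hlower tendsto_const_nhds (fun n => ?_)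
      (fun n => ?_)
    · rw [sub_le_iff_le_add, one_div_pow, ← sub_le_iff_le_add', le_div_iff₀ (by positivity),
        sub_mul, div_mul_cancel₀ _ (by positivity)]
      linarith [Int.lt_floor_add_one ((2 : ℝ) ^ n * x)]
    · rw [div_le_iff₀ (by positivity), mul_comm]
      exact Int.floor_le _
  rw [hasSum_iff_tendsto_nat_of_nonneg
    (fun k => div_nonneg (by exact_mod_cast binDigit_succ_nonneg x k) (by positivity))]
  simpa only [hpartial, Int.fract] using hg.sub_const (⌊x⌋ : ℝ)

noncomputable def weightedDigitSum (x : ℝ) : ℝ :=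
  ∑' k : ℕ, ((k + 1 : ℕ) : ℝ) * (binDigit x (k + 1) : ℝ) / 2 ^ (k + 1)

lemma fSteinhaus_eq (x : ℝ) : fSteinhaus x = 2 * x - weightedDigitSum x := rfl

lemma summable_weightedDigit (x : ℝ) :
    Summable (fun k : ℕ => ((k + 1 : ℕ) : ℝ) * (binDigit x (k + 1) : ℝ) / 2 ^ (k + 1)) := by
  have hgeom : Summable (fun n : ℕ => (n : ℝ) * (1 / 2 : ℝ) ^ n) := by
    simpa using summable_pow_mul_geometric_of_norm_lt_one 1 (r := (1 / 2 : ℝ)) (by norm_num)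
  refine Summable.of_nonneg_of_le (fun k => by have := binDigit_succ_nonneg x k; positivity)
    (fun k => ?_) ((summable_nat_add_iff 1).mpr hgeom)
  rw [one_div_pow, ← div_eq_mul_one_div]
  gcongr
  exact mul_le_of_le_one_right (by positivity) (by exact_mod_cast binDigit_succ_le_one x k)

lemma weightedDigitSum_add_intCast (x : ℝ) (n : ℤ) :
    weightedDigitSum (x + n) = weightedDigitSum x := by
  simp only [weightedDigitSum, binDigit_add_intCast]

lemma weightedDigitSum_eq (x : ℝ) :
    weightedDigitSum x =
      (binDigit x 1 + weightedDigitSum (2 * x) + Int.fract (2 * x)) / 2 := by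
  have htail : ∀ k : ℕ,
      ((k + 1 + 1 : ℕ) : ℝ) * (binDigit x (k + 1 + 1) : ℝ) / 2 ^ (k + 1 + 1) =
        (((k + 1 : ℕ) : ℝ) * (binDigit (2 * x) (k + 1) : ℝ) / 2 ^ (k + 1)
          + (binDigit (2 * x) (k + 1) : ℝ) / 2 ^ (k + 1)) / 2 := by
    intro k
    rw [binDigit_two_mul]
    push_cast
    field_simp
    ring
  rw [weightedDigitSum, (summable_weightedDigit x).tsum_eq_zero_add, tsum_congr htail,
    tsum_div_const, (summable_weightedDigit _).tsum_add (hasSum_binDigit _).summable,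
    (hasSum_binDigit _).tsum_eq, ← weightedDigitSum]
  push_cast
  ring

lemma weightedDigitSum_sub_half {γ : ℝ} (h₁ : 1 / 2 ≤ γ) (h₂ : γ < 1) :
    weightedDigitSum (γ - 1 / 2) = weightedDigitSum γ - 1 / 2 := by
  have hdouble : 2 * (γ - 1 / 2) = 2 * γ + ((-1 : ℤ) : ℝ) := by push_cast; ring
  rw [weightedDigitSum_eq (γ - 1 / 2), weightedDigitSum_eq γ, hdouble,
    weightedDigitSum_add_intCast, Int.fract_add_intCast,
    binDigit_one_eq_zero (by linarith) (by linarith), binDigit_one_eq_one h₁ h₂]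
  push_cast
  ring

/-- `f(γ/2 + 1/2) = (1 − γ + f(γ))/2 = f(γ/2 + 1/4)` for `γ ∈ [1/2, 1)`. -/
theorem fSteinhaus_selfaffine (γ : ℝ) (h1 : 1 / 2 ≤ γ) (h2 : γ < 1) :
    fSteinhaus (γ / 2 + 1 / 2) = (1 - γ + fSteinhaus γ) / 2 ∧
      fSteinhaus (γ / 2 + 1 / 4) = (1 - γ + fSteinhaus γ) / 2 := by
  have hfract : Int.fract γ = γ := Int.fract_eq_self.mpr ⟨by linarith, h2⟩
  constructor
  · have hdouble : 2 * (γ / 2 + 1 / 2) = γ + ((1 : ℤ) : ℝ) := by push_cast; ring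
    rw [fSteinhaus_eq, fSteinhaus_eq, weightedDigitSum_eq, hdouble, weightedDigitSum_add_intCast,
      Int.fract_add_intCast, hfract, binDigit_one_eq_one (by linarith) (by linarith)]
    push_cast
    ring
  · have hdouble : 2 * (γ / 2 + 1 / 4) = (γ - 1 / 2) + ((1 : ℤ) : ℝ) := by push_cast; ring
    have hfract' : Int.fract (γ - 1 / 2) = γ - 1 / 2 :=
      Int.fract_eq_self.mpr ⟨by linarith, by linarith⟩
    rw [fSteinhaus_eq, fSteinhaus_eq, weightedDigitSum_eq, hdouble, weightedDigitSum_add_intCast,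
      Int.fract_add_intCast, hfract', weightedDigitSum_sub_half h1 h2,
      binDigit_one_eq_one (by linarith) (by linarith)]
    push_cast
    ring
end

section
/- Let s(n) = x₁ + ⋯ + x_n be the partial sums of the Steinhaus sequence and γ_n = n·2^{-⌈log₂ n⌉}. Then for every n ≥ 1, (s(n) − n·log₂ n)/n = ξ(γ_n), where ξ(γ) = 2 − log₂ γ − (1/γ)Σ_{k≥1} k ε_k 2^{-k} with (ε_k) the binary digits of γ (convention: infinitely many zeros; for γ = 1 all digits k ≥ 1 are zero). -/
/-- `ξ(γ) = 2 − log₂ γ − (1/γ) Σ_{k≥1} k ε_k 2^{-k}`. -/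
noncomputable def xiSteinhaus (γ : ℝ) : ℝ :=
  2 - Real.logb 2 γ - (1 / γ) * ∑' k : ℕ, ((k + 1 : ℕ) : ℝ) * (binDigit γ (k + 1) : ℝ) / 2 ^ (k + 1)

/-- Partial sums of the Steinhaus sequence `x_j = 2^(ν₂(j)+1)`. -/
def steinhausSum (n : ℕ) : ℕ :=
  ∑ j ∈ Finset.Icc 1 n, 2 ^ (padicValNat 2 j + 1)

open Finset

theorem Int.floor_natCast_div_natCast {K : Type*} [Field K] [LinearOrder K] [IsOrderedRing K]
    [FloorRing K] (a b : ℕ) : ⌊(a : K) / b⌋ = (a / b : ℕ) := by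
  rw [Int.floor_div_natCast, Int.floor_natCast, Int.natCast_div]

lemma binDigit_natCast_div_two_pow_of_lt {n m i : ℕ} (hi : i < m) :
    binDigit ((n : ℝ) / 2 ^ m) (m - i) = (n / 2 ^ i : ℕ) - 2 * (n / 2 ^ (i + 1) : ℕ) := by
  obtain ⟨k, rfl⟩ := Nat.exists_eq_add_of_lt hi
  have h₁ : (2 : ℝ) ^ (i + k + 1 - i) * (n / 2 ^ (i + k + 1)) = (n : ℝ) / (2 ^ i : ℕ) := by
    rw [show i + k + 1 - i = k + 1 by omega, show i + k + 1 = i + (k + 1) by omega, pow_add]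
    push_cast; field_simp; ring
  have h₂ : (2 : ℝ) ^ (i + k + 1 - i - 1) * (n / 2 ^ (i + k + 1)) = (n : ℝ) / (2 ^ (i + 1) : ℕ) := by
    rw [show i + k + 1 - i - 1 = k by omega, show i + k + 1 = i + 1 + k by omega, pow_add]
    push_cast; field_simp
  rw [binDigit, h₁, h₂, Int.floor_natCast_div_natCast, Int.floor_natCast_div_natCast]

lemma binDigit_natCast_div_two_pow_of_gt {n m k : ℕ} (hk : m < k) :
    binDigit ((n : ℝ) / 2 ^ m) k = 0 := by
  obtain ⟨j, rfl⟩ := Nat.exists_eq_add_of_lt hk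
  have h₁ : (2 : ℝ) ^ (m + j + 1) * (n / 2 ^ m) = (n * 2 ^ (j + 1) : ℕ) := by
    rw [add_assoc, pow_add]; push_cast; field_simp
  have h₂ : (2 : ℝ) ^ (m + j + 1 - 1) * (n / 2 ^ m) = (n * 2 ^ j : ℕ) := by
    rw [Nat.add_sub_cancel, pow_add]; push_cast; field_simp
  rw [binDigit, h₁, h₂, Int.floor_natCast, Int.floor_natCast]
  push_cast; ring

theorem sum_range_sub_mul_sub_two_mul {R : Type*} [CommRing R] (v : ℕ → R) (m : ℕ) :
    ∑ i ∈ range m, ((m : R) - i) * (v i - 2 * v (i + 1)) * 2 ^ i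
      = m * v 0 - ∑ i ∈ range m, 2 ^ (i + 1) * v (i + 1) := by
  have hsplit : ∀ i ∈ range m, ((m : R) - i) * (v i - 2 * v (i + 1)) * 2 ^ i
      = (((m : R) - i) * 2 ^ i * v i - ((m : R) - (i + 1 : ℕ)) * 2 ^ (i + 1) * v (i + 1))
        - 2 ^ (i + 1) * v (i + 1) := by
    intro i _
    push_cast; ring
  rw [sum_congr rfl hsplit, sum_sub_distrib,
    sum_range_sub' (fun i => ((m : R) - i) * 2 ^ i * v i)]
  simp

lemma two_pow_mul_tsum_binDigit (n m : ℕ) :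
    2 ^ m * ∑' k : ℕ, ((k + 1 : ℕ) : ℝ) * (binDigit ((n : ℝ) / 2 ^ m) (k + 1) : ℝ) / 2 ^ (k + 1)
      = m * n - ∑ i ∈ range m, 2 ^ (i + 1) * ((n / 2 ^ (i + 1) : ℕ) : ℝ) := by
  rw [tsum_eq_sum (s := range m), ← sum_range_reflect, mul_sum]
  · have := sum_range_sub_mul_sub_two_mul (fun i => ((n / 2 ^ i : ℕ) : ℝ)) m
    simp only [pow_zero, Nat.div_one] at this
    rw [← this]
    refine sum_congr rfl fun i hi => ?_
    rw [mem_range] at hi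
    rw [show m - 1 - i + 1 = m - i by omega, binDigit_natCast_div_two_pow_of_lt hi,
      Nat.cast_sub hi.le, pow_sub₀ _ two_ne_zero hi.le]
    simp only [Int.cast_sub, Int.cast_mul, Int.cast_natCast, Int.cast_ofNat]
    field_simp
  · intro k hk
    rw [mem_range, not_lt] at hk
    rw [binDigit_natCast_div_two_pow_of_gt (Nat.lt_succ_of_le hk)]
    simp

lemma xiSteinhaus_natCast_div_two_pow {n : ℕ} (hn : n ≠ 0) (m : ℕ) :
    xiSteinhaus ((n : ℝ) / 2 ^ m)
      = 2 - Real.logb 2 n + (∑ i ∈ range m, 2 ^ (i + 1) * ((n / 2 ^ (i + 1) : ℕ) : ℝ)) / n := by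
  have hT : ∑' k : ℕ, ((k + 1 : ℕ) : ℝ) * (binDigit ((n : ℝ) / 2 ^ m) (k + 1) : ℝ) / 2 ^ (k + 1)
      = (m * n - ∑ i ∈ range m, 2 ^ (i + 1) * ((n / 2 ^ (i + 1) : ℕ) : ℝ)) / 2 ^ m := by
    rw [← two_pow_mul_tsum_binDigit]; field_simp
  rw [xiSteinhaus, hT, Real.logb_div (by positivity) (by positivity), Real.logb_pow,
    Real.logb_self_eq_one one_lt_two]
  field_simp
  ring

lemma two_pow_padicValNat_succ {j K : ℕ} (hj : j ≠ 0) (hK : padicValNat 2 j < K) :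
    2 ^ (padicValNat 2 j + 1) = 1 + ∑ k ∈ range K, if 2 ^ k ∣ j then 2 ^ k else 0 := by
  have hdvd : {k ∈ range K | 2 ^ k ∣ j} = range (padicValNat 2 j + 1) := by
    ext k
    simp only [mem_filter, mem_range, padicValNat_dvd_iff_le hj]
    omega
  rw [← sum_filter, hdvd, Nat.geomSum_eq le_rfl, Nat.div_one]
  have := Nat.one_le_two_pow (n := padicValNat 2 j + 1)
  omega

lemma steinhausSum_eq_add_sum {n K : ℕ} (hK : n < 2 ^ K) :
    steinhausSum n = n + ∑ k ∈ range K, 2 ^ k * (n / 2 ^ k) := by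
  have hx : ∀ j ∈ Ioc 0 n, 2 ^ (padicValNat 2 j + 1)
      = 1 + ∑ k ∈ range K, if 2 ^ k ∣ j then 2 ^ k else 0 := by
    intro j hj
    rw [mem_Ioc] at hj
    refine two_pow_padicValNat_succ hj.1.ne' ?_
    have := Nat.le_of_dvd hj.1 (pow_padicValNat_dvd (p := 2) (n := j))
    exact (Nat.pow_lt_pow_iff_right one_lt_two).1 (by omega)
  rw [steinhausSum, show Icc 1 n = Ioc 0 n from rfl, sum_congr rfl hx, sum_add_distrib, sum_comm]
  simp only [sum_const, Nat.card_Ioc, Nat.sub_zero, smul_eq_mul, mul_one, ← sum_filter,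
    Nat.Ioc_filter_dvd_card_eq_div, mul_comm]

lemma steinhausSum_eq_two_mul_add_sum {n m : ℕ} (hm : n ≤ 2 ^ m) :
    steinhausSum n = 2 * n + ∑ i ∈ range m, 2 ^ (i + 1) * (n / 2 ^ (i + 1)) := by
  rw [steinhausSum_eq_add_sum (K := m + 1) (hm.trans_lt (Nat.pow_lt_pow_succ one_lt_two)),
    sum_range_succ']
  simp only [pow_zero, Nat.div_one, one_mul]
  ring

/-- `(s(n) − n log₂ n)/n = ξ(γ_n)` with `γ_n = n 2^{-⌈log₂ n⌉}`. -/
theorem steinhausSum_eq_xi (n : ℕ) (hn : 1 ≤ n) :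
    ((steinhausSum n : ℝ) - n * Real.logb 2 n) / n =
      xiSteinhaus ((n : ℝ) * (2 : ℝ) ^ (-⌈Real.logb 2 (n : ℝ)⌉)) := by
  have hceil : ⌈Real.logb 2 (n : ℝ)⌉ = Nat.clog 2 n := by
    simpa using Real.ceil_logb_natCast (b := 2) (n.cast_nonneg (α := ℝ))
  rw [hceil, zpow_neg, zpow_natCast, ← div_eq_mul_inv,
    xiSteinhaus_natCast_div_two_pow (by omega),
    steinhausSum_eq_two_mul_add_sum (Nat.le_pow_clog one_lt_two n)]
  push_cast
  field_simp
  ring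
end

section
/- For the partial sums s(n) of the Steinhaus sequence, s(n)/(n·log₂ n) → 1 as n → ∞. -/
/-!
Since `x_{2j} = 2 x_j` and `x_{2j+1} = 2`, the partial sums satisfy
`s(2m + r) = 2m + 2r + 2 s(m)` for `r < 2`. Halving `n` lowers `⌊log₂ n⌋` by one, so induction
gives `n ⌊log₂ n⌋ ≤ s(n) ≤ n (⌊log₂ n⌋ + 2)`; hence `s(n) = n log₂ n + O(n)`, and `n = o(n log₂ n)`.
-/

open Filter

open Asymptotics

theorem steinhausSum_succ (n : ℕ) :
    steinhausSum (n + 1) = steinhausSum n + 2 ^ (padicValNat 2 (n + 1) + 1) :=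
  Finset.sum_Icc_succ_top (by omega) _

theorem steinhausSum_two_mul (m : ℕ) : steinhausSum (2 * m) = 2 * m + 2 * steinhausSum m := by
  induction m with
  | zero => simp [steinhausSum]
  | succ m ih =>
    have hodd : padicValNat 2 (2 * m + 1) = 0 := padicValNat.eq_zero_of_not_dvd (by omega)
    have heven : padicValNat 2 (2 * (m + 1)) = padicValNat 2 (m + 1) + 1 := by
      rw [padicValNat.mul two_ne_zero m.succ_ne_zero, padicValNat.self one_lt_two, add_comm]
    rw [show 2 * (m + 1) = 2 * m + 1 + 1 by ring, steinhausSum_succ, steinhausSum_succ, hodd, ih,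
      ← show 2 * (m + 1) = 2 * m + 1 + 1 by ring, heven, steinhausSum_succ]
    ring

theorem steinhausSum_two_mul_add {m r : ℕ} (hr : r < 2) :
    steinhausSum (2 * m + r) = 2 * m + 2 * r + 2 * steinhausSum m := by
  interval_cases r
  · simpa using steinhausSum_two_mul m
  · rw [steinhausSum_succ, steinhausSum_two_mul,
      padicValNat.eq_zero_of_not_dvd (show ¬ 2 ∣ 2 * m + 1 by omega)]
    ring

theorem steinhausSum_le (n : ℕ) : steinhausSum n ≤ n * (Nat.log 2 n + 2) := by
  induction n using Nat.strong_induction_on with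
  | _ n ih =>
    rcases Nat.lt_or_ge n 2 with hn | hn
    · interval_cases n <;> simp [steinhausSum]
    obtain ⟨m, r, hr, rfl⟩ : ∃ m r, r < 2 ∧ n = 2 * m + r :=
      ⟨n / 2, n % 2, Nat.mod_lt n two_pos, (Nat.div_add_mod n 2).symm⟩
    rw [steinhausSum_two_mul_add hr, Nat.log_of_one_lt_of_le one_lt_two hn,
      show (2 * m + r) / 2 = m by omega]
    have := ih m (by omega)
    interval_cases r <;> nlinarith

-- The extra `log₂ n + 2` is what lets the induction pass through odd `n`.
theorem le_steinhausSum {n : ℕ} (hn : 1 ≤ n) :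
    n * Nat.log 2 n + Nat.log 2 n + 2 ≤ steinhausSum n := by
  induction n using Nat.strong_induction_on with
  | _ n ih =>
    rcases Nat.lt_or_ge n 2 with hn' | hn'
    · interval_cases n; simp [steinhausSum]
    obtain ⟨m, r, hr, rfl⟩ : ∃ m r, r < 2 ∧ n = 2 * m + r :=
      ⟨n / 2, n % 2, Nat.mod_lt n two_pos, (Nat.div_add_mod n 2).symm⟩
    rw [steinhausSum_two_mul_add hr, Nat.log_of_one_lt_of_le one_lt_two hn',
      show (2 * m + r) / 2 = m by omega]
    have := ih m (by omega) (by omega)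
    interval_cases r <;> nlinarith

theorem abs_steinhausSum_sub_le (n : ℕ) :
    |(steinhausSum n : ℝ) - n * Real.logb 2 n| ≤ 2 * n := by
  rcases Nat.eq_zero_or_pos n with rfl | hn
  · simp [steinhausSum]
  have hlog_lt : Real.logb 2 n < Nat.log 2 n + 1 := by
    have h := Nat.lt_floor_add_one (Real.logb (2 : ℕ) n)
    rw [Real.natFloor_logb_natCast] at h
    exact_mod_cast h
  have hlog_le : (Nat.log 2 n : ℝ) ≤ Real.logb 2 n := by simpa using Real.natLog_le_logb n 2
  have hupper : (steinhausSum n : ℝ) ≤ n * (Nat.log 2 n + 2) := by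
    exact_mod_cast steinhausSum_le n
  have hlower : (n * Nat.log 2 n : ℝ) ≤ steinhausSum n := by
    exact_mod_cast (Nat.le_add_right _ _).trans ((Nat.le_add_right _ _).trans (le_steinhausSum hn))
  have hn_nonneg : (0 : ℝ) ≤ n := n.cast_nonneg
  rw [abs_le]
  constructor <;> nlinarith

theorem isLittleO_natCast_natCast_mul_logb {b : ℝ} (hb : 1 < b) :
    (fun n : ℕ => (n : ℝ)) =o[atTop] fun n => n * Real.logb b n := by
  have hlog : Tendsto (fun n : ℕ => Real.logb b n) atTop atTop :=
    (Real.tendsto_logb_atTop hb).comp tendsto_natCast_atTop_atTop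
  simpa using (isBigO_refl (fun n : ℕ => (n : ℝ)) atTop).mul_isLittleO
    ((isLittleO_one_left_iff ℝ).2 (tendsto_norm_atTop_atTop.comp hlog))

/-- `s(n)/(n log₂ n) → 1` as `n → ∞`. -/
theorem steinhausSum_div_tendsto_one :
    Tendsto (fun n : ℕ => (steinhausSum n : ℝ) / (n * Real.logb 2 n)) atTop (nhds 1) := by
  have hequiv : (fun n => (steinhausSum n : ℝ)) ~[atTop] fun n => n * Real.logb 2 n :=
    (IsBigO.of_bound 2 (Eventually.of_forall fun n => by
      simpa using abs_steinhausSum_sub_le n)).trans_isLittleO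
      (isLittleO_natCast_natCast_mul_logb one_lt_two)
  refine (isEquivalent_iff_tendsto_one ?_).1 hequiv
  filter_upwards [eventually_gt_atTop 1] with n hn
  have hn' : (1 : ℝ) < n := by exact_mod_cast hn
  exact mul_ne_zero (by positivity) (Real.logb_pos one_lt_two hn').ne'
end
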